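/- arXiv:2312.03422 — 5 statements merged into one kernel-verified Lean document; each statement's English description precedes it below -/
import Mathlib

section
/- For every ideal parameter θ* with θ* ∈ [θ_min + ε, θ_max − ε] and all θ, Y ∈ ℝ, the projection operator satisfies (θ − θ*)·(Proj(θ, Y) − Y) ≤ 0. -/
/-- The convex function `h(θ) = ((θ − θmin − ε)(θ − θmax + ε)) / ((θmax − θmin − ε)·ε)`. -/
noncomputable def hFun (θmin θmax ε θ : ℝ) : ℝ :=
  ((θ - θmin - ε) * (θ - θmax + ε)) / ((θmax - θmin - ε) * ε)

/-- The projection operator `Proj(θ, Y)`. -/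
noncomputable def projOp (θmin θmax ε θ Y : ℝ) : ℝ :=
  if 0 < hFun θmin θmax ε θ ∧ 0 < Y * deriv (hFun θmin θmax ε) θ then
    Y - Y * hFun θmin θmax ε θ
  else Y

lemma hFun_hasDerivAt (θmin θmax ε θ : ℝ) :
    HasDerivAt (hFun θmin θmax ε)
      ((2 * θ - θmin - θmax) / ((θmax - θmin - ε) * ε)) θ := by
  have h : HasDerivAt (fun θ : ℝ => ((θ - θmin - ε) * (θ - θmax + ε)) / ((θmax - θmin - ε) * ε))
      (((1 : ℝ) * (θ - θmax + ε) + (θ - θmin - ε) * 1) / ((θmax - θmin - ε) * ε)) θ := by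
    exact ((((hasDerivAt_id θ).sub_const θmin).sub_const ε).mul
      (((hasDerivAt_id θ).sub_const θmax).add_const ε)).div_const _
  have : ((1 : ℝ) * (θ - θmax + ε) + (θ - θmin - ε) * 1) = 2 * θ - θmin - θmax := by ring
  rw [this] at h
  exact h

lemma hFun_deriv (θmin θmax ε θ : ℝ) :
    deriv (hFun θmin θmax ε) θ = (2 * θ - θmin - θmax) / ((θmax - θmin - ε) * ε) :=
  (hFun_hasDerivAt θmin θmax ε θ).deriv

/-- For every ideal parameter `θ* ∈ [θmin + ε, θmax − ε]` and all `θ, Y ∈ ℝ`,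
`(θ − θ*)·(Proj(θ, Y) − Y) ≤ 0`. -/
theorem proj_error_inequality (θmin θmax ε : ℝ) (hlt : θmin < θmax)
    (hε0 : 0 < ε) (hε : ε < (θmax - θmin) / 2)
    (θstar : ℝ) (hθstar : θstar ∈ Set.Icc (θmin + ε) (θmax - ε))
    (θ Y : ℝ) :
    (θ - θstar) * (projOp θmin θmax ε θ Y - Y) ≤ 0 := by
  obtain ⟨hs1, hs2⟩ := hθstar
  have hc : 0 < (θmax - θmin - ε) * ε := by nlinarith
  rw [projOp]
  split_ifs with hcond
  · obtain ⟨h1, h2⟩ := hcond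
    rw [hFun_deriv] at h2
    rw [hFun] at h1 ⊢
    have hnum : 0 < (θ - θmin - ε) * (θ - θmax + ε) := by
      by_contra hn
      push_neg at hn
      have := div_nonpos_of_nonpos_of_nonneg hn hc.le
      linarith
    have hnum2 : 0 < Y * (2 * θ - θmin - θmax) := by
      by_contra hn
      push_neg at hn
      have heq : Y * ((2 * θ - θmin - θmax) / ((θmax - θmin - ε) * ε))
          = (Y * (2 * θ - θmin - θmax)) / ((θmax - θmin - ε) * ε) := by ring
      rw [heq] at h2
      have := div_nonpos_of_nonpos_of_nonneg hn hc.le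
      linarith
    rcases lt_or_ge θ (θmin + ε) with hθ | hθ
    · -- θ < θmin + ε, left side: Y < 0, θ - θstar < 0
      have hY : Y < 0 := by nlinarith
      have hts : θ - θstar < 0 := by linarith
      have hh : 0 < ((θ - θmin - ε) * (θ - θmax + ε)) / ((θmax - θmin - ε) * ε) := h1
      nlinarith [mul_pos (neg_pos.2 hY) hh]
    · have hθ' : θmax - ε < θ := by nlinarith
      have hY : 0 < Y := by nlinarith
      have hts : 0 < θ - θstar := by linarith
      have hh : 0 < ((θ - θmin - ε) * (θ - θmax + ε)) / ((θmax - θmin - ε) * ε) := h1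
      nlinarith [mul_pos hY hh]
  · simp
end

section
/- Let Y : ℝ → ℝ be continuous and let θ : ℝ → ℝ be differentiable with θ'(t) = Proj(θ(t), Y(t)) for all t ≥ 0. If h(θ(0)) ≤ 1, then h(θ(t)) ≤ 1 for all t ≥ 0; equivalently, the set Ω_θ = {θ ∈ ℝ : h(θ) ≤ 1} is forward invariant under the projection-based adaptation law. -/
open Set Filter Topology

/-- A nonpositive slope only where `f x = c` would not suffice (think of `c + (x - a)³`); on the
whole region `c ≤ f x` it lets every strict barrier `c + r (x - a)`, `r > 0`, apply. -/
theorem le_of_deriv_nonpos_of_le {f f' : ℝ → ℝ} {a b c : ℝ} (hf : ContinuousOn f (Icc a b))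
    (hf' : ∀ x ∈ Ico a b, HasDerivWithinAt f (f' x) (Ici x) x) (ha : f a ≤ c)
    (bound : ∀ x ∈ Ico a b, c ≤ f x → f' x ≤ 0) : ∀ x ∈ Icc a b, f x ≤ c := by
  intro x hx
  have fence : ∀ r > (0 : ℝ), f x ≤ c + r * (x - a) := by
    intro r hr
    refine image_le_of_deriv_right_lt_deriv_boundary hf hf' (B := fun y => c + r * (y - a))
      (B' := fun _ => r) (by simpa using ha) (fun y => ?_) (fun y hy hfy => ?_) hx
    · simpa using (((hasDerivAt_id y).sub_const a).const_mul r).const_add c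
    · have hca : c ≤ f y := by rw [hfy]; nlinarith [hy.1]
      exact (bound y hy hca).trans_lt hr
  have hlim : Tendsto (fun r : ℝ => c + r * (x - a)) (𝓝[>] 0) (𝓝 c) := by
    have : Continuous fun r : ℝ => c + r * (x - a) := by fun_prop
    simpa using (this.tendsto 0).mono_left nhdsWithin_le_nhds
  exact ge_of_tendsto hlim (eventually_nhdsWithin_of_forall fence)

theorem differentiable_hFun (θmin θmax ε : ℝ) : Differentiable ℝ (hFun θmin θmax ε) := by
  unfold hFun
  fun_prop

theorem deriv_hFun_mul_projOp_nonpos {θmin θmax ε θ : ℝ} (Y : ℝ) (hθ : 1 ≤ hFun θmin θmax ε θ) :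
    deriv (hFun θmin θmax ε) θ * projOp θmin θmax ε θ Y ≤ 0 := by
  unfold projOp
  split_ifs with hactive
  · nlinarith [hactive.2]
  · have hinactive : Y * deriv (hFun θmin θmax ε) θ ≤ 0 := by
      simpa using not_and.mp hactive (by linarith)
    linarith

theorem proj_forward_invariant_general (θmin θmax ε : ℝ)
    (Y θ : ℝ → ℝ)
    (hθ : ∀ t ≥ (0:ℝ), HasDerivAt θ (projOp θmin θmax ε (θ t) (Y t)) t)
    (h0 : hFun θmin θmax ε (θ 0) ≤ 1) :
    ∀ t ≥ (0:ℝ), hFun θmin θmax ε (θ t) ≤ 1 := by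
  intro t ht
  have hderiv : ∀ s ≥ (0 : ℝ), HasDerivAt (fun s => hFun θmin θmax ε (θ s))
      (deriv (hFun θmin θmax ε) (θ s) * projOp θmin θmax ε (θ s) (Y s)) s := fun s hs =>
    (differentiable_hFun θmin θmax ε (θ s)).hasDerivAt.comp s (hθ s hs)
  refine le_of_deriv_nonpos_of_le (fun s hs => (hderiv s hs.1).continuousAt.continuousWithinAt)
    (fun s hs => (hderiv s hs.1).hasDerivWithinAt) h0
    (fun s _ hs => deriv_hFun_mul_projOp_nonpos (Y s) hs) t ⟨ht, le_rfl⟩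

/-- If `θ` is differentiable with `θ'(t) = Proj(θ(t), Y(t))` for all `t ≥ 0`, `Y` is
continuous, and `h(θ(0)) ≤ 1`, then `h(θ(t)) ≤ 1` for all `t ≥ 0`:
the set `Ω_θ = {θ : h(θ) ≤ 1}` is forward invariant under the adaptation law. -/
theorem proj_forward_invariant (θmin θmax ε : ℝ) (hlt : θmin < θmax)
    (hε0 : 0 < ε) (hε : ε < (θmax - θmin) / 2)
    (Y θ : ℝ → ℝ) (hY : Continuous Y)
    (hθ : ∀ t ≥ (0:ℝ), HasDerivAt θ (projOp θmin θmax ε (θ t) (Y t)) t)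
    (h0 : hFun θmin θmax ε (θ 0) ≤ 1) :
    ∀ t ≥ (0:ℝ), hFun θmin θmax ε (θ t) ≤ 1 :=
  proj_forward_invariant_general θmin θmax ε Y θ hθ h0
end

section
/- For all θ, Y ∈ ℝ with h(θ) ≥ 1, the projected vector field points inward at the boundary of the projection set: Proj(θ, Y)·h'(θ) ≤ 0. -/
/-- For all `θ, Y ∈ ℝ` with `h(θ) ≥ 1`, the projected vector field points inward at the
boundary of the projection set: `Proj(θ, Y)·h'(θ) ≤ 0`. -/
theorem proj_points_inward (θmin θmax ε : ℝ) (hlt : θmin < θmax)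
    (hε0 : 0 < ε) (hε : ε < (θmax - θmin) / 2)
    (θ Y : ℝ) (hθ : 1 ≤ hFun θmin θmax ε θ) :
    projOp θmin θmax ε θ Y * deriv (hFun θmin θmax ε) θ ≤ 0 := by
  unfold projOp
  split_ifs with hc
  · obtain ⟨_, hYd⟩ := hc
    have : (Y - Y * hFun θmin θmax ε θ) * deriv (hFun θmin θmax ε) θ
        = Y * deriv (hFun θmin θmax ε) θ * (1 - hFun θmin θmax ε θ) := by ring
    rw [this]
    exact mul_nonpos_of_nonneg_of_nonpos hYd.le (by linarith)
  · push_neg at hc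
    exact hc (by linarith)
end

section
/- Let a ∈ ℝ, b ≠ 0, λ ∈ ℝ, C ≠ 0, d̄ ∈ ℝ, and let γ_α, γ_β, γ_ζ > 0 be adaptation gains. Let Proj_α, Proj_β, Proj_ζ be projection operators with respective bounds [α_min, α_max], [β_min, β_max], [ζ_min, ζ_max] and tolerances ε_α, ε_β, ε_ζ, and suppose the ideal parameters α* = (λ − a)/b, β* = 1/(b·C), ζ* = −d̄ satisfy α* ∈ [α_min + ε_α, α_max − ε_α], β* ∈ [β_min + ε_β, β_max − ε_β], ζ* ∈ [ζ_min + ε_ζ, ζ_max − ε_ζ]. Let X, Y, r, α̂, β̂, ζ̂ : ℝ → ℝ be differentiable, set e = X − Y, and suppose for all t ≥ 0: e'(t) = λ·e(t) + b·α̃(t)·X(t) + b·β̃(t)·r(t) + b·ζ̃(t) (where α̃ = α̂ − α*, β̃ = β̂ − β*, ζ̃ = ζ̂ − ζ*), α̂'(t) = γ_α·Proj_α(α̂(t), −sgn(b)·X(t)·e(t)), β̂'(t) = γ_β·Proj_β(β̂(t), −sgn(b)·r(t)·e(t)), and ζ̂'(t) = γ_ζ·Proj_ζ(ζ̂(t),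 −sgn(b)·e(t)). Then the Lyapunov function V(t) = e(t)²/2 + |b|·α̃(t)²/(2γ_α) + |b|·β̃(t)²/(2γ_β) + |b|·ζ̃(t)²/(2γ_ζ) is differentiable and satisfies V'(t) ≤ λ·e(t)² for all t ≥ 0. -/
/-!
Along the closed loop, `V' = e e' + |b| (α̃ Proj_α + β̃ Proj_β + ζ̃ Proj_ζ)`, and the terms
`b α̃ X e`, `b β̃ r e`, `b ζ̃ e` of `e e'` would cancel exactly against the adaptive terms if
there were no projection. The projection only ever decreases `θ̃ · Proj(θ, Y)` below `θ̃ · Y`: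
it is active only where `h(θ) > 0` and `Y h'(θ) > 0`, and there, since `h` is convex and
`h(θ*) ≤ 0`, the tangent inequality `h'(θ)(θ − θ*) ≥ h(θ) − h(θ*) > 0` forces `θ̃ Y > 0`,
so subtracting `Y h(θ)` lowers the product. What remains is `V' ≤ λ e²`.
-/

theorem Real.sign_mul_abs (b : ℝ) : Real.sign b * |b| = b := by
  rcases lt_trichotomy b 0 with hb | rfl | hb
  · rw [Real.sign_of_neg hb, abs_of_neg hb]; ring
  · simp
  · rw [Real.sign_of_pos hb, abs_of_pos hb]; ring

section ProjectionOperator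

variable {θmin θmax ε : ℝ}

theorem deriv_hFun (θ : ℝ) :
    deriv (hFun θmin θmax ε) θ
      = ((θ - θmin - ε) + (θ - θmax + ε)) / ((θmax - θmin - ε) * ε) := by
  have h : HasDerivAt (hFun θmin θmax ε)
      ((1 * (θ - θmax + ε) + (θ - θmin - ε) * 1) / ((θmax - θmin - ε) * ε)) θ :=
    ((((hasDerivAt_id θ).sub_const θmin).sub_const ε).mul
      (((hasDerivAt_id θ).sub_const θmax).add_const ε)).div_const _
  rw [h.deriv]
  ring

theorem hFun_sub_tangent (θ θ' : ℝ) :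
    hFun θmin θmax ε θ' - (hFun θmin θmax ε θ + deriv (hFun θmin θmax ε) θ * (θ' - θ))
      = (θ' - θ) ^ 2 / ((θmax - θmin - ε) * ε) := by
  rw [deriv_hFun]
  unfold hFun
  ring

variable {θstar : ℝ} (hε : 0 < ε) (hstar : θstar ∈ Set.Icc (θmin + ε) (θmax - ε))
include hε hstar

theorem hFun_denom_pos : 0 < (θmax - θmin - ε) * ε := by
  have := hstar.1.trans hstar.2
  exact mul_pos (by linarith) hε

theorem hFun_nonpos_of_mem_Icc : hFun θmin θmax ε θstar ≤ 0 :=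
  div_nonpos_of_nonpos_of_nonneg
    (mul_nonpos_of_nonneg_of_nonpos (by linarith [hstar.1]) (by linarith [hstar.2]))
    (hFun_denom_pos hε hstar).le

theorem hFun_tangent_le (θ : ℝ) :
    hFun θmin θmax ε θ ≤ hFun θmin θmax ε θstar + deriv (hFun θmin θmax ε) θ * (θ - θstar) := by
  have := hFun_sub_tangent (θmin := θmin) (θmax := θmax) (ε := ε) θ θstar
  have : 0 ≤ (θstar - θ) ^ 2 / ((θmax - θmin - ε) * ε) :=
    div_nonneg (sq_nonneg _) (hFun_denom_pos hε hstar).le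
  linarith

theorem mul_projOp_le (θ Y : ℝ) :
    (θ - θstar) * projOp θmin θmax ε θ Y ≤ (θ - θstar) * Y := by
  unfold projOp
  split_ifs with hactive
  · obtain ⟨hpos, hdir⟩ := hactive
    have htangent : 0 < deriv (hFun θmin θmax ε) θ * (θ - θstar) := by
      linarith [hFun_tangent_le hε hstar θ, hFun_nonpos_of_mem_Icc hε hstar]
    have hY : 0 < (θ - θstar) * Y := by
      refine pos_of_mul_pos_left (b := deriv (hFun θmin θmax ε) θ ^ 2) ?_ (sq_nonneg _)
      linear_combination mul_pos htangent hdir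
    linear_combination (mul_pos hY hpos).le
  · exact le_rfl

theorem abs_mul_mul_projOp_sign_le (b Z θ : ℝ) :
    |b| * ((θ - θstar) * projOp θmin θmax ε θ (-Real.sign b * Z)) ≤ -b * ((θ - θstar) * Z) :=
  calc |b| * ((θ - θstar) * projOp θmin θmax ε θ (-Real.sign b * Z))
      ≤ |b| * ((θ - θstar) * (-Real.sign b * Z)) :=
        mul_le_mul_of_nonneg_left (mul_projOp_le hε hstar θ _) (abs_nonneg b)
    _ = -b * ((θ - θstar) * Z) := by
        linear_combination (-(θ - θstar) * Z) * Real.sign_mul_abs b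

end ProjectionOperator

theorem HasDerivAt.sq_div_two {f : ℝ → ℝ} {f' t : ℝ} (hf : HasDerivAt f f' t) :
    HasDerivAt (fun s => f s ^ 2 / 2) (f t * f') t :=
  ((hf.fun_pow 2).div_const 2).congr_deriv (by ring)

theorem HasDerivAt.mul_sub_sq_div_two_mul {θ : ℝ → ℝ} {c θstar γ P t : ℝ} (hγ : γ ≠ 0)
    (hθ : HasDerivAt θ (γ * P) t) :
    HasDerivAt (fun s => c * (θ s - θstar) ^ 2 / (2 * γ)) (c * ((θ t - θstar) * P)) t :=
  ((((hθ.sub_const θstar).fun_pow 2).const_mul c).div_const (2 * γ)).congr_deriv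
    (by field_simp; ring)

theorem lyapunov_derivative_bound_general
    (a b lam C dbar γα γβ γζ : ℝ)
    (hγα : 0 < γα) (hγβ : 0 < γβ) (hγζ : 0 < γζ)
    (αmin αmax εα : ℝ) (hεα0 : 0 < εα)
    (βmin βmax εβ : ℝ) (hεβ0 : 0 < εβ)
    (ζmin ζmax εζ : ℝ) (hεζ0 : 0 < εζ)
    (hαstar : (lam - a) / b ∈ Set.Icc (αmin + εα) (αmax - εα))
    (hβstar : 1 / (b * C) ∈ Set.Icc (βmin + εβ) (βmax - εβ))
    (hζstar : -dbar ∈ Set.Icc (ζmin + εζ) (ζmax - εζ))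
    (X r αh βh ζh : ℝ → ℝ)
    (e : ℝ → ℝ)
    (herr : ∀ t ≥ (0:ℝ), HasDerivAt e
      (lam * e t + b * (αh t - (lam - a) / b) * X t
        + b * (βh t - 1 / (b * C)) * r t + b * (ζh t - (-dbar))) t)
    (hαdot : ∀ t ≥ (0:ℝ), HasDerivAt αh
      (γα * projOp αmin αmax εα (αh t) (-Real.sign b * (X t * e t))) t)
    (hβdot : ∀ t ≥ (0:ℝ), HasDerivAt βh
      (γβ * projOp βmin βmax εβ (βh t) (-Real.sign b * (r t * e t))) t)
    (hζdot : ∀ t ≥ (0:ℝ), HasDerivAt ζh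
      (γζ * projOp ζmin ζmax εζ (ζh t) (-Real.sign b * e t)) t)
    (V : ℝ → ℝ)
    (hV : V = fun t => e t ^ 2 / 2 + |b| * (αh t - (lam - a) / b) ^ 2 / (2 * γα)
      + |b| * (βh t - 1 / (b * C)) ^ 2 / (2 * γβ)
      + |b| * (ζh t - (-dbar)) ^ 2 / (2 * γζ)) :
    ∀ t ≥ (0:ℝ), DifferentiableAt ℝ V t ∧ deriv V t ≤ lam * e t ^ 2 := by
  intro t ht
  have hVderiv : HasDerivAt V
      (e t * (lam * e t + b * (αh t - (lam - a) / b) * X t + b * (βh t - 1 / (b * C)) * r t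
          + b * (ζh t - -dbar))
        + |b| * ((αh t - (lam - a) / b) * projOp αmin αmax εα (αh t) (-b.sign * (X t * e t)))
        + |b| * ((βh t - 1 / (b * C)) * projOp βmin βmax εβ (βh t) (-b.sign * (r t * e t)))
        + |b| * ((ζh t - -dbar) * projOp ζmin ζmax εζ (ζh t) (-b.sign * e t))) t := by
    subst hV
    exact (((herr t ht).sq_div_two.add
      ((hαdot t ht).mul_sub_sq_div_two_mul hγα.ne')).add
      ((hβdot t ht).mul_sub_sq_div_two_mul hγβ.ne')).add
      ((hζdot t ht).mul_sub_sq_div_two_mul hγζ.ne')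
  refine ⟨hVderiv.differentiableAt, ?_⟩
  rw [hVderiv.deriv]
  linear_combination abs_mul_mul_projOp_sign_le hεα0 hαstar b (X t * e t) (αh t)
    + abs_mul_mul_projOp_sign_le hεβ0 hβstar b (r t * e t) (βh t)
    + abs_mul_mul_projOp_sign_le hεζ0 hζstar b (e t) (ζh t)

/-- With the projection-based adaptive laws, the Lyapunov function
`V = e²/2 + |b|·α̃²/(2γ_α) + |b|·β̃²/(2γ_β) + |b|·ζ̃²/(2γ_ζ)` is differentiable and its
derivative satisfies `V'(t) ≤ λ·e(t)²` for all `t ≥ 0`. -/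
theorem lyapunov_derivative_bound
    (a b lam C dbar γα γβ γζ : ℝ) (hb : b ≠ 0) (hC : C ≠ 0)
    (hγα : 0 < γα) (hγβ : 0 < γβ) (hγζ : 0 < γζ)
    (αmin αmax εα : ℝ) (hαlt : αmin < αmax) (hεα0 : 0 < εα) (hεα : εα < (αmax - αmin) / 2)
    (βmin βmax εβ : ℝ) (hβlt : βmin < βmax) (hεβ0 : 0 < εβ) (hεβ : εβ < (βmax - βmin) / 2)
    (ζmin ζmax εζ : ℝ) (hζlt : ζmin < ζmax) (hεζ0 : 0 < εζ) (hεζ : εζ < (ζmax - ζmin) / 2)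
    (hαstar : (lam - a) / b ∈ Set.Icc (αmin + εα) (αmax - εα))
    (hβstar : 1 / (b * C) ∈ Set.Icc (βmin + εβ) (βmax - εβ))
    (hζstar : -dbar ∈ Set.Icc (ζmin + εζ) (ζmax - εζ))
    (X Y r αh βh ζh : ℝ → ℝ)
    (hX : Differentiable ℝ X) (hY : Differentiable ℝ Y) (hr : Differentiable ℝ r)
    (e : ℝ → ℝ) (he : e = fun t => X t - Y t)
    (herr : ∀ t ≥ (0:ℝ), HasDerivAt e
      (lam * e t + b * (αh t - (lam - a) / b) * X t
        + b * (βh t - 1 / (b * C)) * r t + b * (ζh t - (-dbar))) t)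
    (hαdot : ∀ t ≥ (0:ℝ), HasDerivAt αh
      (γα * projOp αmin αmax εα (αh t) (-Real.sign b * (X t * e t))) t)
    (hβdot : ∀ t ≥ (0:ℝ), HasDerivAt βh
      (γβ * projOp βmin βmax εβ (βh t) (-Real.sign b * (r t * e t))) t)
    (hζdot : ∀ t ≥ (0:ℝ), HasDerivAt ζh
      (γζ * projOp ζmin ζmax εζ (ζh t) (-Real.sign b * e t)) t)
    (V : ℝ → ℝ)
    (hV : V = fun t => e t ^ 2 / 2 + |b| * (αh t - (lam - a) / b) ^ 2 / (2 * γα)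
      + |b| * (βh t - 1 / (b * C)) ^ 2 / (2 * γβ)
      + |b| * (ζh t - (-dbar)) ^ 2 / (2 * γζ)) :
    ∀ t ≥ (0:ℝ), DifferentiableAt ℝ V t ∧ deriv V t ≤ lam * e t ^ 2 :=
  lyapunov_derivative_bound_general a b lam C dbar γα γβ γζ hγα hγβ hγζ αmin αmax εα hεα0 βmin βmax
    εβ hεβ0 ζmin ζmax εζ hεζ0 hαstar hβstar hζstar X r αh βh ζh e herr hαdot hβdot hζdot V hV
end

section
/- (Barbalat-type lemma) Let e : ℝ → ℝ be differentiable on [0, ∞) such that e and its derivative e' are bounded on [0, ∞), and suppose ∫₀^∞ e(t)² dt < ∞. Then e(t) → 0 as t → ∞. -/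
/-!
A function with bounded derivative is uniformly continuous, so once `|e t| ≥ ε` at some large
`t`, `|e| ≥ ε / 2` on a whole interval `[t, t + δ]` with `δ` independent of `t`. That interval
carries at least `(ε / 2)² δ` of the integral of `e²`, which contradicts the tails
`∫ₜ^{t+δ} e²` of a convergent integral tending to zero.
-/

open MeasureTheory Filter Set Topology

theorem tendsto_intervalIntegral_self_add_atTop {E : Type*} [NormedAddCommGroup E]
    [NormedSpace ℝ E] {f : ℝ → E} {a : ℝ} (hf : IntegrableOn f (Ioi a)) (δ : ℝ) :
    Tendsto (fun t => ∫ s in t..t + δ, f s) atTop (𝓝 0) := by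
  have hF : ∀ {b : ℝ → ℝ}, Tendsto b atTop atTop →
      Tendsto (fun t => ∫ s in a..b t, f s) atTop (𝓝 (∫ s in Ioi a, f s)) :=
    intervalIntegral_tendsto_integral_Ioi a hf
  have hint : ∀ b ≥ a, IntervalIntegrable f volume a b := fun b hb =>
    (intervalIntegrable_iff_integrableOn_Ioc_of_le hb).2 (hf.mono_set Ioc_subset_Ioi_self)
  have hsub : (fun t => (∫ s in a..t + δ, f s) - ∫ s in a..t, f s) =ᶠ[atTop]
      fun t => ∫ s in t..t + δ, f s := by
    filter_upwards [eventually_ge_atTop a, eventually_ge_atTop (a - δ)] with t ht ht'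
    exact intervalIntegral.integral_interval_sub_left (hint _ (by linarith)) (hint t ht)
  simpa using ((hF (tendsto_atTop_add_const_right _ δ tendsto_id)).sub (hF tendsto_id)).congr' hsub

theorem UniformContinuousOn.exists_half_norm_le_of_norm_le {E : Type*} [SeminormedAddCommGroup E]
    {g : ℝ → E} {a ε : ℝ} (hg : UniformContinuousOn g (Ici a)) (hε : 0 < ε) :
    ∃ δ > 0, ∀ t ≥ a, ε ≤ ‖g t‖ → ∀ s ∈ Icc t (t + δ), ε / 2 ≤ ‖g s‖ := by
  obtain ⟨δ, hδ, hclose⟩ := Metric.uniformContinuousOn_iff_le.1 hg (ε / 2) (half_pos hε)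
  refine ⟨δ, hδ, fun t ht hgt s hs => ?_⟩
  have hdist : dist s t ≤ δ := by
    rw [Real.dist_eq, abs_of_nonneg (by linarith [hs.1])]
    linarith [hs.2]
  have := hclose s (ht.trans hs.1) t ht hdist
  rw [dist_eq_norm] at this
  linarith [norm_sub_norm_le (g t) (g s), norm_sub_rev (g t) (g s)]

theorem tendsto_zero_of_uniformContinuousOn_of_integrableOn_norm_rpow {E : Type*}
    [SeminormedAddCommGroup E] {g : ℝ → E} {a p : ℝ} (hp : 0 ≤ p)
    (hg : UniformContinuousOn g (Ici a)) (hint : IntegrableOn (fun t => ‖g t‖ ^ p) (Ici a)) :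
    Tendsto g atTop (𝓝 0) := by
  refine tendsto_zero_iff_norm_tendsto_zero.2 <| Metric.tendsto_atTop.2 fun ε hε => ?_
  obtain ⟨δ, hδ, hlarge⟩ := hg.exists_half_norm_le_of_norm_le hε
  have hsmall : ∀ᶠ t in atTop, ∫ s in t..t + δ, ‖g s‖ ^ p < (ε / 2) ^ p * δ :=
    (tendsto_intervalIntegral_self_add_atTop (hint.mono_set Ioi_subset_Ici_self) δ).eventually
      (gt_mem_nhds (by positivity))
  obtain ⟨N, hN⟩ := eventually_atTop.1 (hsmall.and (eventually_ge_atTop a))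
  refine ⟨N, fun t ht => ?_⟩
  obtain ⟨hsmall_at, hat⟩ := hN t ht
  rw [Real.dist_0_eq_abs, abs_norm]
  by_contra! hgt
  have hbig : (ε / 2) ^ p * δ ≤ ∫ s in t..t + δ, ‖g s‖ ^ p := by
    have hii : IntervalIntegrable (fun s => ‖g s‖ ^ p) volume t (t + δ) :=
      (intervalIntegrable_iff_integrableOn_Icc_of_le (by linarith)).2
        (hint.mono_set fun s hs => hat.trans hs.1)
    calc (ε / 2) ^ p * δ = ∫ _ in t..t + δ, (ε / 2) ^ p := by simp [mul_comm]
      _ ≤ ∫ s in t..t + δ, ‖g s‖ ^ p :=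
        intervalIntegral.integral_mono_on (by linarith) intervalIntegrable_const hii fun s hs =>
          Real.rpow_le_rpow (by positivity) (hlarge t hat hgt s hs) hp
  linarith

theorem Convex.uniformContinuousOn_of_norm_deriv_le {E : Type*} [NormedAddCommGroup E]
    [NormedSpace ℝ E] {f : ℝ → E} {s : Set ℝ} {C : ℝ} (hs : Convex ℝ s)
    (hf : ∀ x ∈ s, DifferentiableAt ℝ f x) (bound : ∀ x ∈ s, ‖deriv f x‖ ≤ C) :
    UniformContinuousOn f s :=
  (hs.lipschitzOnWith_of_nnnorm_deriv_le hf (C := C.toNNReal) fun x hx =>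
    norm_toNNReal (a := deriv f x) ▸ Real.toNNReal_le_toNNReal (bound x hx)).uniformContinuousOn

/-- Barbalat-type lemma: if `e` is differentiable on `[0, ∞)`, `e` and `e'` are bounded
on `[0, ∞)`, and `∫₀^∞ e(t)² dt < ∞`, then `e(t) → 0` as `t → ∞`. -/
theorem barbalat_l2 (e : ℝ → ℝ)
    (hdiff : ∀ t ≥ (0:ℝ), DifferentiableAt ℝ e t)
    (hbound : ∃ M : ℝ, ∀ t ≥ (0:ℝ), |e t| ≤ M ∧ |deriv e t| ≤ M)
    (hL2 : IntegrableOn (fun t => e t ^ 2) (Set.Ici 0)) :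
    Tendsto e atTop (nhds 0) := by
  obtain ⟨M, hM⟩ := hbound
  have huc : UniformContinuousOn e (Ici 0) :=
    (convex_Ici 0).uniformContinuousOn_of_norm_deriv_le hdiff fun t ht => (hM t ht).2
  refine tendsto_zero_of_uniformContinuousOn_of_integrableOn_norm_rpow zero_le_two huc ?_
  simpa only [Real.norm_eq_abs, Real.rpow_two, sq_abs] using hL2
end
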